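/- Let M' be the Markov transition relation on the set 𝒜' of simply connected acyclic digraphs on vertex set V = {1,…,N}, N ≥ 2, where a transition from X to Y exists iff either Y = X \ {(i,j)} for some non-bridge arc (i,j) of X, or Y = (X \ {(i,j)}) ∪ {(j,i)} for some bridge arc (i,j) of X, or Y = X ∪ {(i,j)} for some non-arc (i,j) with Y acyclic. Then for any two G, H ∈ 𝒜' there is a sequence of transitions from G to H staying within 𝒜'. -/

import Mathlib

/-- A digraph given by its arc set is acyclic if no vertex lies on a directed cycle. -/
def DAcyclic {V : Type*} (A : Finset (V × V)) : Prop :=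
  ∀ a : V, ¬ Relation.TransGen (fun x y => (x, y) ∈ A) a a

/-- The underlying undirected simple graph of an arc set. -/
def toGraph {V : Type*} [DecidableEq V] (A : Finset (V × V)) : SimpleGraph V where
  Adj a b := a ≠ b ∧ ((a, b) ∈ A ∨ (b, a) ∈ A)
  symm := ⟨fun _ _ h => ⟨h.1.symm, h.2.symm⟩⟩
  loopless := ⟨fun _ h => h.1 rfl⟩

instance {V : Type*} [DecidableEq V] (A : Finset (V × V)) :
    DecidableRel (toGraph A).Adj :=
  fun a b => inferInstanceAs (Decidable (a ≠ b ∧ ((a, b) ∈ A ∨ (b, a) ∈ A)))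

/-- One transition of the Markov chain `M'`: delete a non-bridge arc, reverse a
bridge arc, or add an arc so that the result is acyclic. -/
def Move {V : Type*} [DecidableEq V] (X Y : Finset (V × V)) : Prop :=
  (∃ i j : V, (i, j) ∈ X ∧ ¬(toGraph X).IsBridge s(i, j) ∧ Y = X.erase (i, j)) ∨
  (∃ i j : V, (i, j) ∈ X ∧ (toGraph X).IsBridge s(i, j) ∧
    Y = insert (j, i) (X.erase (i, j))) ∨
  (∃ i j : V, (i, j) ∉ X ∧ Y = insert (i, j) X ∧ DAcyclic Y)

/-!
Every acyclic digraph is contained in a transitive tournament (the arcs `a → b` with `f a < f b`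
for a topological ordering `f`). Within the connected acyclic digraphs one can climb from a
digraph up to any acyclic superset by adding arcs, and descend back by deleting them, since every
intermediate digraph contains the connected starting one. Two transitive tournaments are joined
by adjacent transpositions of their orderings, and such a transposition reverses exactly one arc:
reverse it directly if it is a bridge, otherwise delete it (the rest stays connected) and add it
back reversed.
-/

section
variable {V : Type*}

lemma DAcyclic.mono {A B : Finset (V × V)} (h : A ⊆ B) (hB : DAcyclic B) : DAcyclic A :=
  fun a ha => hB a (Relation.TransGen.mono (fun _ _ hx => h hx) a a ha)

lemma DAcyclic.swap_notMem {A : Finset (V × V)} (hA : DAcyclic A) {i j : V} (h : (i, j) ∈ A) :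
    (j, i) ∉ A :=
  fun h' => hA i (.tail (.single h) h')

end

section
variable {V : Type*} [DecidableEq V]

lemma toGraph_adj (A : Finset (V × V)) (a b : V) :
    (toGraph A).Adj a b ↔ a ≠ b ∧ ((a, b) ∈ A ∨ (b, a) ∈ A) := Iff.rfl

lemma toGraph_mono {A B : Finset (V × V)} (h : A ⊆ B) : toGraph A ≤ toGraph B :=
  fun _ _ hab => ⟨hab.1, hab.2.imp (@h _) (@h _)⟩

lemma toGraph_erase {A : Finset (V × V)} {i j : V} (hji : (j, i) ∉ A) :
    toGraph (A.erase (i, j)) = (toGraph A).deleteEdges {s(i, j)} := by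
  ext a b
  simp only [toGraph_adj, SimpleGraph.deleteEdges_adj, Finset.mem_erase, Set.mem_singleton_iff,
    Sym2.eq_iff]
  grind

lemma toGraph_insert_swap_erase {A : Finset (V × V)} {i j : V} (hij : (i, j) ∈ A) :
    toGraph (insert (j, i) (A.erase (i, j))) = toGraph A := by
  ext a b
  simp only [toGraph_adj, Finset.mem_insert, Finset.mem_erase]
  grind

def IsConnectedAcyclic (A : Finset (V × V)) : Prop :=
  (toGraph A).Connected ∧ DAcyclic A

def ChainMove (X Y : Finset (V × V)) : Prop :=
  Move X Y ∧ IsConnectedAcyclic Y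

lemma move_erase {X : Finset (V × V)} {i j : V} (hij : (i, j) ∈ X) (hji : (j, i) ∉ X)
    (hconn : (toGraph (X.erase (i, j))).Connected) : Move X (X.erase (i, j)) := by
  refine Or.inl ⟨i, j, hij, ?_, rfl⟩
  rw [SimpleGraph.isBridge_iff, not_not, ← toGraph_erase hji]
  exact hconn.preconnected i j

lemma chainMove_insert_and_erase {X : Finset (V × V)} {a : V × V} (hX : IsConnectedAcyclic X)
    (ha : a ∉ X) (hacyc : DAcyclic (insert a X)) :
    ChainMove X (insert a X) ∧ ChainMove (insert a X) X := by
  obtain ⟨i, j⟩ := a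
  have hconn : (toGraph (insert (i, j) X)).Connected :=
    hX.1.mono (toGraph_mono (Finset.subset_insert _ _))
  refine ⟨⟨Or.inr (Or.inr ⟨i, j, ha, rfl, hacyc⟩), hconn, hacyc⟩, ?_, hX⟩
  have hmove := move_erase (Finset.mem_insert_self _ X)
    (hacyc.swap_notMem (Finset.mem_insert_self _ X)) (by rw [Finset.erase_insert ha]; exact hX.1)
  rwa [Finset.erase_insert ha] at hmove

lemma reflTransGen_chainMove_union {Z S : Finset (V × V)} (hZ : IsConnectedAcyclic Z)
    (hS : DAcyclic (Z ∪ S)) :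
    Relation.ReflTransGen ChainMove Z (Z ∪ S) ∧ Relation.ReflTransGen ChainMove (Z ∪ S) Z := by
  induction S using Finset.induction_on with
  | empty =>
    rw [Finset.union_empty]
    exact ⟨.refl, .refl⟩
  | insert a T _ ih =>
    rw [Finset.union_insert] at hS ⊢
    obtain ⟨up, down⟩ := ih (hS.mono (Finset.subset_insert _ _))
    by_cases ha : a ∈ Z ∪ T
    · rw [Finset.insert_eq_of_mem ha]
      exact ⟨up, down⟩
    have hZT : IsConnectedAcyclic (Z ∪ T) :=
      ⟨hZ.1.mono (toGraph_mono Finset.subset_union_left), hS.mono (Finset.subset_insert _ _)⟩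
    obtain ⟨hinsert, herase⟩ := chainMove_insert_and_erase hZT ha hS
    exact ⟨up.tail hinsert, down.head herase⟩

lemma reflTransGen_chainMove_of_subset {Z W : Finset (V × V)} (hZ : IsConnectedAcyclic Z)
    (hW : DAcyclic W) (h : Z ⊆ W) :
    Relation.ReflTransGen ChainMove Z W ∧ Relation.ReflTransGen ChainMove W Z := by
  rw [← Finset.union_eq_right.mpr h] at hW ⊢
  exact reflTransGen_chainMove_union hZ hW

lemma reflTransGen_chainMove_reverse {X : Finset (V × V)} {i j : V} (hX : IsConnectedAcyclic X)
    (hij : (i, j) ∈ X) (hacyc : DAcyclic (insert (j, i) (X.erase (i, j)))) :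
    Relation.ReflTransGen ChainMove X (insert (j, i) (X.erase (i, j))) := by
  have hji := hX.2.swap_notMem hij
  have hY : IsConnectedAcyclic (insert (j, i) (X.erase (i, j))) :=
    ⟨toGraph_insert_swap_erase hij ▸ hX.1, hacyc⟩
  by_cases hbridge : (toGraph X).IsBridge s(i, j)
  · exact .single ⟨Or.inr (Or.inl ⟨i, j, hij, hbridge, rfl⟩), hY⟩
  have hconn : (toGraph (X.erase (i, j))).Connected :=
    toGraph_erase hji ▸ hX.1.connected_delete_edge_of_not_isBridge hbridge
  have hadd : Move (X.erase (i, j)) (insert (j, i) (X.erase (i, j))) :=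
    Or.inr (Or.inr ⟨j, i, fun h => hji (Finset.mem_of_mem_erase h), rfl, hacyc⟩)
  exact .head ⟨move_erase hij hji hconn, hconn, hX.2.mono (Finset.erase_subset _ _)⟩
    (.single ⟨hadd, hY⟩)

end

lemma Fin.swap_castSucc_succ_lt_swap_iff {m : ℕ} (k : Fin m) (x y : Fin (m + 1)) :
    Equiv.swap k.castSucc k.succ x < Equiv.swap k.castSucc k.succ y ↔
      (x, y) = (k.succ, k.castSucc) ∨ ((x, y) ≠ (k.castSucc, k.succ) ∧ x < y) := by
  simp only [Equiv.swap_apply_def]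
  split_ifs <;> simp only [Fin.ext_iff, Fin.lt_def, Fin.val_castSucc, Fin.val_succ,
    Prod.mk.injEq, ne_eq] at * <;> omega

section
variable {V : Type*} [Fintype V]

def transitiveTournament {n : ℕ} (f : V ≃ Fin n) : Finset (V × V) :=
  Finset.univ.filter fun p => f p.1 < f p.2

@[simp]
lemma mem_transitiveTournament {n : ℕ} {f : V ≃ Fin n} {a b : V} :
    (a, b) ∈ transitiveTournament f ↔ f a < f b := by
  simp [transitiveTournament]

lemma DAcyclic.exists_subset_transitiveTournament {X : Finset (V × V)} (hX : DAcyclic X) {n : ℕ}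
    (hn : Fintype.card V = n) : ∃ f : V ≃ Fin n, X ⊆ transitiveTournament f := by
  let _ : PartialOrder V :=
    { le := Relation.ReflTransGen fun x y => (x, y) ∈ X
      le_refl := fun _ => .refl
      le_trans := fun _ _ _ => .trans
      le_antisymm := fun a b hab hba => by
        rcases Relation.reflTransGen_iff_eq_or_transGen.mp hab with rfl | hab'
        · rfl
        rcases Relation.reflTransGen_iff_eq_or_transGen.mp hba with rfl | hba'
        · rfl
        exact (hX a (hab'.trans hba')).elim }
  let _ : Fintype (LinearExtension V) := inferInstanceAs (Fintype V)
  let e := Fintype.orderIsoFinOfCardEq (LinearExtension V) hn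
  refine ⟨e.symm.toEquiv, fun ⟨a, b⟩ hab => mem_transitiveTournament.mpr (e.symm.strictMono ?_)⟩
  refine lt_of_le_of_ne (toLinearExtension.monotone (Relation.ReflTransGen.single hab)) ?_
  rintro rfl
  exact hX a (.single hab)

variable [DecidableEq V]

lemma isConnectedAcyclic_transitiveTournament [Nonempty V] {n : ℕ} (f : V ≃ Fin n) :
    IsConnectedAcyclic (transitiveTournament f) := by
  have hlt {a b : V} (h : Relation.TransGen (fun x y => (x, y) ∈ transitiveTournament f) a b) :
      f a < f b := by
    induction h with
    | single h => exact mem_transitiveTournament.mp h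
    | tail _ h ih => exact ih.trans (mem_transitiveTournament.mp h)
  refine ⟨⟨fun a b => ?_⟩, fun a ha => (hlt ha).false⟩
  rcases eq_or_ne a b with rfl | hne
  · rfl
  · refine SimpleGraph.Adj.reachable ⟨hne, ?_⟩
    simpa only [mem_transitiveTournament] using lt_or_gt_of_ne (f.injective.ne hne)

lemma transitiveTournament_trans_swap {m : ℕ} (f : V ≃ Fin (m + 1)) (k : Fin m) :
    transitiveTournament (f.trans (Equiv.swap k.castSucc k.succ)) =
      insert (f.symm k.succ, f.symm k.castSucc)
        ((transitiveTournament f).erase (f.symm k.castSucc, f.symm k.succ)) := by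
  ext ⟨a, b⟩
  simp only [mem_transitiveTournament, Equiv.trans_apply, Fin.swap_castSucc_succ_lt_swap_iff,
    Finset.mem_insert, Finset.mem_erase, Prod.mk.injEq, ne_eq, Equiv.eq_symm_apply]

lemma reflTransGen_chainMove_transitiveTournament_trans {m : ℕ} (f : V ≃ Fin (m + 1))
    (σ : Equiv.Perm (Fin (m + 1))) :
    Relation.ReflTransGen ChainMove (transitiveTournament f)
      (transitiveTournament (f.trans σ)) := by
  have : Nonempty V := ⟨f.symm 0⟩
  have hσ : σ ∈ Submonoid.closure (Set.range fun k : Fin m => Equiv.swap k.castSucc k.succ) := by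
    rw [Equiv.Perm.mclosure_swap_castSucc_succ]
    exact Submonoid.mem_top σ
  induction hσ using Submonoid.closure_induction generalizing f with
  | mem _ hτ =>
    obtain ⟨k, rfl⟩ := hτ
    rw [transitiveTournament_trans_swap]
    refine reflTransGen_chainMove_reverse (isConnectedAcyclic_transitiveTournament f) (by simp) ?_
    rw [← transitiveTournament_trans_swap]
    exact (isConnectedAcyclic_transitiveTournament _).2
  | one => exact .refl
  | mul τ ρ _ _ hτ hρ =>
    rw [Equiv.Perm.mul_def, ← Equiv.trans_assoc]
    exact (hρ f).trans (hτ _)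

lemma reflTransGen_chainMove_transitiveTournament {m : ℕ} (f g : V ≃ Fin (m + 1)) :
    Relation.ReflTransGen ChainMove (transitiveTournament f) (transitiveTournament g) := by
  simpa [← Equiv.trans_assoc] using
    reflTransGen_chainMove_transitiveTournament_trans f (f.symm.trans g)

theorem IsConnectedAcyclic.reflTransGen_chainMove {G H : Finset (V × V)}
    (hG : IsConnectedAcyclic G) (hH : IsConnectedAcyclic H) :
    Relation.ReflTransGen ChainMove G H := by
  have := hG.1.nonempty
  obtain ⟨m, hm⟩ := Nat.exists_eq_succ_of_ne_zero (Fintype.card_ne_zero (α := V))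
  obtain ⟨f, hGf⟩ := hG.2.exists_subset_transitiveTournament hm
  obtain ⟨g, hHg⟩ := hH.2.exists_subset_transitiveTournament hm
  have hG_up := (reflTransGen_chainMove_of_subset hG
    (isConnectedAcyclic_transitiveTournament f).2 hGf).1
  have hH_down := (reflTransGen_chainMove_of_subset hH
    (isConnectedAcyclic_transitiveTournament g).2 hHg).2
  exact hG_up.trans ((reflTransGen_chainMove_transitiveTournament f g).trans hH_down)

end

theorem stmt_10_general (N : ℕ) (G H : Finset (Fin N × Fin N))
    (hG : (toGraph G).Connected ∧ DAcyclic G)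
    (hH : (toGraph H).Connected ∧ DAcyclic H) :
    Relation.ReflTransGen
      (fun X Y => Move X Y ∧ (toGraph Y).Connected ∧ DAcyclic Y) G H :=
  IsConnectedAcyclic.reflTransGen_chainMove hG hH

/-- The Markov chain `M'` on simply connected acyclic digraphs is irreducible. -/
theorem stmt_10 (N : ℕ) (hN : 2 ≤ N) (G H : Finset (Fin N × Fin N))
    (hG : (toGraph G).Connected ∧ DAcyclic G)
    (hH : (toGraph H).Connected ∧ DAcyclic H) :
    Relation.ReflTransGen
      (fun X Y => Move X Y ∧ (toGraph Y).Connected ∧ DAcyclic Y) G H :=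
  stmt_10_general N G H hG hH
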